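/- For complex parameters a₁, a₂, b₁, b₂ with b₁, b₂ not non-positive integers, and any complex x: ₂F₂(a₁, a₂; b₁, b₂; x+y) = e^x · Σ_{j₁=0}^∞ Σ_{j₂=0}^∞ [(b₁−a₁)_{j₁}(b₂−a₂)_{j₂}(a₂)_{j₁} / ((b₁)_{j₁}(b₂)_{j₁+j₂})] · ((−x)^{j₁}/j₁!)((−x)^{j₂}/j₂!) · ₂F₂(a₁, a₂+j₁; b₁+j₁, b₂+j₁+j₂; y). -/

import Mathlib

open scoped BigOperators

/-- Pochhammer symbol (ascending factorial) `(a)_n`. -/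
noncomputable def poch (a : ℂ) (n : ℕ) : ℂ := ∏ k ∈ Finset.range n, (a + (k : ℂ))

/-- Generalized hypergeometric series with numerator list `a`, denominator list `b`. -/
noncomputable def hyp (a b : List ℂ) (z : ℂ) : ℂ :=
  ∑' i : ℕ, ((a.map (fun c => poch c i)).prod / (b.map (fun c => poch c i)).prod)
    * z ^ i / (Nat.factorial i : ℂ)

/-- Partial sums `u_m = j₁ + ⋯ + j_m` of a `p`-tuple of nonnegative integers. -/
def U (p : ℕ) (j : Fin p → ℕ) (m : ℕ) : ℕ :=
  ∑ r ∈ Finset.range m, if h : r < p then j ⟨r, h⟩ else 0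


lemma poch_zero (a : ℂ) : poch a 0 = 1 := by simp [poch]

lemma poch_succ (a : ℂ) (n : ℕ) : poch a (n + 1) = poch a n * (a + n) := by
  simp [poch, Finset.prod_range_succ]

lemma poch_succ' (a : ℂ) (n : ℕ) : poch a (n + 1) = a * poch (a + 1) n := by
  rw [poch, Finset.prod_range_succ', poch, mul_comm]
  congr 1
  · norm_num
  · exact Finset.prod_congr rfl fun k _ => by push_cast; ring

lemma poch_add (a : ℂ) (m n : ℕ) : poch a (m + n) = poch a m * poch (a + m) n := by
  rw [poch, Finset.prod_range_add]
  congr 1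
  exact Finset.prod_congr rfl fun k _ => by push_cast; ring

lemma poch_ne_zero {b : ℂ} (hb : ∀ n : ℕ, b ≠ -(n : ℂ)) (n : ℕ) : poch b n ≠ 0 := by
  rw [poch]
  apply Finset.prod_ne_zero_iff.2
  intro k _ h
  exact hb k (by linear_combination h)

lemma shift_avoid {b : ℂ} (hb : ∀ n : ℕ, b ≠ -(n : ℂ)) (m : ℕ) :
    ∀ n : ℕ, b + (m : ℂ) ≠ -(n : ℂ) := by
  intro n h
  exact hb (m + n) (by push_cast; linear_combination h)

/-- polynomial Chu–Vandermonde -/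
lemma chu_poly (k : ℕ) (c d : ℂ) :
    ∑ j ∈ Finset.range (k + 1), (-1 : ℂ) ^ j * (k.choose j : ℂ) * poch c j * poch (d + j) (k - j)
      = poch (d - c) k := by
  induction k generalizing d with
  | zero => simp [poch_zero]
  | succ k ih =>
    have gzero : (-1 : ℂ) ^ (k+1) * (k.choose (k+1) : ℂ) * poch c (k+1) * poch (d + (k+1 : ℕ)) (k + 1 - (k+1)) = 0 := by
      simp [Nat.choose_succ_self]
    have step : ∑ j ∈ Finset.range (k + 1 + 1),
        (-1 : ℂ) ^ j * ((k+1).choose j : ℂ) * poch c j * poch (d + j) (k + 1 - j)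
        = (d - c) * ∑ j ∈ Finset.range (k + 1),
            (-1 : ℂ) ^ j * (k.choose j : ℂ) * poch c j * poch ((d + 1) + j) (k - j) := by
      rw [Finset.sum_range_succ' (fun j => (-1 : ℂ) ^ j * ((k+1).choose j : ℂ) * poch c j * poch (d + j) (k + 1 - j)) (k+1)]
      have claim1 : ∀ j ∈ Finset.range (k + 1),
          (-1 : ℂ) ^ (j+1) * ((k+1).choose (j+1) : ℂ) * poch c (j+1) * poch (d + ((j:ℕ)+1 : ℕ)) (k + 1 - (j+1))
          = ((-1 : ℂ) ^ (j+1) * (k.choose (j+1) : ℂ) * poch c (j+1) * poch (d + ((j:ℕ)+1 : ℕ)) (k + 1 - (j+1)))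
            - (-1 : ℂ) ^ j * (k.choose j : ℂ) * poch c j * (c + j) * poch ((d + 1) + j) (k - j) := by
        intro j hj
        rw [Finset.mem_range] at hj
        have h1 : k + 1 - (j+1) = k - j := by omega
        have pascal : ((k+1).choose (j+1) : ℂ) = (k.choose j : ℂ) + (k.choose (j+1) : ℂ) := by
          rw [Nat.choose_succ_succ]; push_cast; ring
        have harg : d + ((j:ℕ)+1 : ℕ) = (d + 1) + (j:ℂ) := by push_cast; ring
        rw [h1, pascal, harg, poch_succ]
        ring
      rw [Finset.sum_congr rfl claim1, Finset.sum_sub_distrib]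
      have claim2 : ∑ j ∈ Finset.range (k + 1),
          (-1 : ℂ) ^ (j+1) * (k.choose (j+1) : ℂ) * poch c (j+1) * poch (d + ((j:ℕ)+1 : ℕ)) (k + 1 - (j+1))
          + (-1 : ℂ) ^ 0 * (k.choose 0 : ℂ) * poch c 0 * poch (d + (0:ℕ)) (k + 1 - 0)
          = ∑ j ∈ Finset.range (k + 1 + 1),
            (-1 : ℂ) ^ j * (k.choose j : ℂ) * poch c j * poch (d + j) (k + 1 - j) := by
        rw [Finset.sum_range_succ' (fun j => (-1 : ℂ) ^ j * (k.choose j : ℂ) * poch c j * poch (d + j) (k + 1 - j)) (k+1)]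
      have claim3 : ∑ j ∈ Finset.range (k + 1 + 1),
            (-1 : ℂ) ^ j * (k.choose j : ℂ) * poch c j * poch (d + j) (k + 1 - j)
          = ∑ j ∈ Finset.range (k + 1),
            (-1 : ℂ) ^ j * (k.choose j : ℂ) * poch c j * ((d + j) * poch ((d + 1) + j) (k - j)) := by
        rw [Finset.sum_range_succ, gzero, add_zero]
        apply Finset.sum_congr rfl
        intro j hj
        rw [Finset.mem_range] at hj
        have h1 : k + 1 - j = (k - j) + 1 := by omega
        have harg : (d + (j:ℂ)) + 1 = (d + 1) + (j:ℂ) := by ring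
        rw [h1, poch_succ', harg]
      -- assemble
      have : ∀ j ∈ Finset.range (k+1),
          (-1 : ℂ) ^ j * (k.choose j : ℂ) * poch c j * ((d + j) * poch ((d + 1) + j) (k - j))
          - (-1 : ℂ) ^ j * (k.choose j : ℂ) * poch c j * (c + j) * poch ((d + 1) + j) (k - j)
          = (d - c) * ((-1 : ℂ) ^ j * (k.choose j : ℂ) * poch c j * poch ((d + 1) + j) (k - j)) := by
        intro j _; ring
      calc ∑ j ∈ Finset.range (k + 1),
            ((-1 : ℂ) ^ (j+1) * (k.choose (j+1) : ℂ) * poch c (j+1) * poch (d + ((j:ℕ)+1 : ℕ)) (k + 1 - (j+1)))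
            - ∑ j ∈ Finset.range (k + 1),
              (-1 : ℂ) ^ j * (k.choose j : ℂ) * poch c j * (c + j) * poch ((d + 1) + j) (k - j)
            + (-1 : ℂ) ^ 0 * ((k+1).choose 0 : ℂ) * poch c 0 * poch (d + (0:ℕ)) (k + 1 - 0)
          = ∑ j ∈ Finset.range (k + 1),
              (-1 : ℂ) ^ j * (k.choose j : ℂ) * poch c j * ((d + j) * poch ((d + 1) + j) (k - j))
            - ∑ j ∈ Finset.range (k + 1),
              (-1 : ℂ) ^ j * (k.choose j : ℂ) * poch c j * (c + j) * poch ((d + 1) + j) (k - j) := by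
            rw [← claim3, ← claim2]; simp only [Nat.choose_zero_right, Nat.cast_one, poch_zero, Nat.cast_zero, add_zero, pow_zero, one_mul]; ring
        _ = ∑ j ∈ Finset.range (k + 1),
              (d - c) * ((-1 : ℂ) ^ j * (k.choose j : ℂ) * poch c j * poch ((d + 1) + j) (k - j)) := by
            rw [← Finset.sum_sub_distrib]
            exact Finset.sum_congr rfl this
        _ = (d - c) * ∑ j ∈ Finset.range (k + 1),
              (-1 : ℂ) ^ j * (k.choose j : ℂ) * poch c j * poch ((d + 1) + j) (k - j) := by
            rw [Finset.mul_sum]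
    rw [step, ih (d+1)]
    have : d + 1 - c = (d - c) + 1 := by ring
    rw [this, ← poch_succ']

lemma chu_div (c d : ℂ) (hd : ∀ n : ℕ, d ≠ -(n : ℂ)) (k : ℕ) :
    ∑ p ∈ Finset.HasAntidiagonal.antidiagonal k,
        (-1 : ℂ) ^ p.1 * poch c p.1 / ((p.1.factorial : ℂ) * (p.2.factorial : ℂ) * poch d p.1)
      = poch (d - c) k / (poch d k * (k.factorial : ℂ)) := by
  rw [Finset.Nat.sum_antidiagonal_eq_sum_range_succ_mk]
  rw [← chu_poly k c d, Finset.sum_div]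
  apply Finset.sum_congr rfl
  intro j hj
  rw [Finset.mem_range] at hj
  have hjk : j ≤ k := by omega
  have hsplit : poch d k = poch d j * poch (d + j) (k - j) := by
    rw [← poch_add]; congr 1; omega
  have hfac : (k.choose j : ℂ) * (j.factorial : ℂ) * ((k - j).factorial : ℂ) = (k.factorial : ℂ) := by
    rw [← Nat.cast_mul, ← Nat.cast_mul, Nat.choose_mul_factorial_mul_factorial hjk]
  have h1 : poch d j ≠ 0 := poch_ne_zero hd j
  have h2 : poch (d + j) (k - j) ≠ 0 := poch_ne_zero (shift_avoid hd j) _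
  have h3 : (j.factorial : ℂ) ≠ 0 := Nat.cast_ne_zero.2 (Nat.factorial_ne_zero j)
  have h4 : ((k - j).factorial : ℂ) ≠ 0 := Nat.cast_ne_zero.2 (Nat.factorial_ne_zero _)
  have h5 : (k.factorial : ℂ) ≠ 0 := Nat.cast_ne_zero.2 (Nat.factorial_ne_zero k)
  have h6 : (k.choose j : ℂ) ≠ 0 := Nat.cast_ne_zero.2 (Nat.choose_pos hjk).ne'
  rw [hsplit, ← hfac]
  field_simp

/-- regrouping an absolutely summable double series along antidiagonals -/
lemma tsum_antidiag (f : ℕ × ℕ → ℂ) (hf : Summable f) :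
    ∑' p : ℕ × ℕ, f p = ∑' n, ∑ p ∈ Finset.HasAntidiagonal.antidiagonal n, f p := by
  rw [← Finset.HasAntidiagonal.sigmaAntidiagonalEquivProd.tsum_eq f]
  have h2 : Summable (fun x : (Σ n : ℕ, Finset.HasAntidiagonal.antidiagonal n) =>
      f (Finset.HasAntidiagonal.sigmaAntidiagonalEquivProd x)) :=
    Finset.HasAntidiagonal.sigmaAntidiagonalEquivProd.summable_iff.2 hf
  calc ∑' (c : Σ n : ℕ, Finset.HasAntidiagonal.antidiagonal n), f (Finset.HasAntidiagonal.sigmaAntidiagonalEquivProd c)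
      = ∑' (n : ℕ) (p : Finset.HasAntidiagonal.antidiagonal n),
          f (Finset.HasAntidiagonal.sigmaAntidiagonalEquivProd ⟨n, p⟩) :=
        Summable.tsum_sigma' (fun n => (hasSum_fintype _).summable) h2
    _ = ∑' n, ∑ p ∈ Finset.HasAntidiagonal.antidiagonal n, f p := by
        congr 1
        funext n
        rw [tsum_fintype]
        exact Finset.sum_finset_coe _ _

lemma fact_ratio (m n : ℕ) :
    m.factorial * ∏ k ∈ Finset.range n, (m + k + 1) = (m + n).factorial := by
  induction n with
  | zero => simp
  | succ n ih =>
    rw [Finset.prod_range_succ, ← mul_assoc, ih]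
    rw [show m + (n+1) = (m + n) + 1 by omega, Nat.factorial_succ]
    ring

lemma norm_poch_shift (a : ℂ) (m n : ℕ) :
    ‖poch (a + (m : ℂ)) n‖ * (m.factorial : ℝ) ≤ (‖a‖ + 1) ^ n * ((m + n).factorial : ℝ) := by
  have h1 : ‖poch (a + (m : ℂ)) n‖ = ∏ k ∈ Finset.range n, ‖a + (m : ℂ) + (k : ℂ)‖ := by
    rw [poch, norm_prod]
  have h2 : ∀ k ∈ Finset.range n, ‖a + (m : ℂ) + (k : ℂ)‖ ≤ (‖a‖ + 1) * ((m : ℝ) + k + 1) := by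
    intro k _
    calc ‖a + (m : ℂ) + (k : ℂ)‖ ≤ ‖a‖ + ‖((m : ℂ) + k)‖ := by
          rw [add_assoc]; exact norm_add_le _ _
      _ = ‖a‖ + ((m : ℝ) + k) := by
          congr 1
          rw [show ((m : ℂ) + k) = (((m + k : ℕ) : ℂ)) by push_cast; ring]
          rw [Complex.norm_natCast]; push_cast; ring
      _ ≤ (‖a‖ + 1) * ((m : ℝ) + k + 1) := by nlinarith [norm_nonneg a, Nat.cast_nonneg (α := ℝ) m, Nat.cast_nonneg (α := ℝ) k]
  calc ‖poch (a + (m : ℂ)) n‖ * (m.factorial : ℝ)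
      ≤ (∏ k ∈ Finset.range n, ((‖a‖ + 1) * ((m : ℝ) + k + 1))) * (m.factorial : ℝ) := by
        apply mul_le_mul_of_nonneg_right _ (by positivity)
        rw [h1]
        exact Finset.prod_le_prod (fun k _ => norm_nonneg _) h2
    _ = (‖a‖ + 1) ^ n * ((m.factorial : ℝ) * ∏ k ∈ Finset.range n, ((m : ℝ) + k + 1)) := by
        rw [Finset.prod_mul_distrib, Finset.prod_const, Finset.card_range]; ring
    _ = (‖a‖ + 1) ^ n * ((m + n).factorial : ℝ) := by
        congr 1
        rw [← fact_ratio m n]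
        push_cast; ring

lemma norm_poch_le (a : ℂ) (n : ℕ) : ‖poch a n‖ ≤ (‖a‖ + 1) ^ n * (n.factorial : ℝ) := by
  have := norm_poch_shift a 0 n
  simpa using this

lemma exists_M (b : ℂ) (hb : ∀ n : ℕ, b ≠ -(n : ℂ)) :
    ∃ M : ℝ, 1 ≤ M ∧ ∀ k : ℕ, ((k : ℝ) + 1) ≤ M * ‖b + (k : ℂ)‖ := by
  set N : ℕ := ⌈2 * ‖b‖⌉₊ + 1 with hN
  have hpos : ∀ k : ℕ, 0 < ‖b + (k : ℂ)‖ := by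
    intro k
    rw [norm_pos_iff]
    intro h
    exact hb k (by linear_combination h)
  refine ⟨max ((Finset.range N).sup' ⟨0, Finset.mem_range.2 (by omega)⟩
      (fun k => ((k : ℝ) + 1) / ‖b + (k : ℂ)‖)) 4, ?_, ?_⟩
  · refine le_trans ?_ (le_max_right _ _); norm_num
  · intro k
    by_cases hk : k < N
    · have h1 : ((k : ℝ) + 1) / ‖b + (k : ℂ)‖ ≤ _ :=
        Finset.le_sup' (fun k : ℕ => ((k : ℝ) + 1) / ‖b + (k : ℂ)‖) (Finset.mem_range.2 hk)
      have h2 := (div_le_iff₀ (hpos k)).1 (h1.trans (le_max_left _ 4))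
      linarith
    · push_neg at hk
      have hk2 : 2 * ‖b‖ + 1 ≤ (k : ℝ) := by
        have : (⌈2 * ‖b‖⌉₊ : ℝ) + 1 ≤ (k : ℝ) := by exact_mod_cast hk
        have := Nat.le_ceil (2 * ‖b‖)
        linarith
      have hlow : (k : ℝ) - ‖b‖ ≤ ‖b + (k : ℂ)‖ := by
        have h3 : ‖(k : ℂ)‖ - ‖-b‖ ≤ ‖(k : ℂ) - (-b)‖ := norm_sub_norm_le _ _
        rw [norm_neg, sub_neg_eq_add, Complex.norm_natCast] at h3
        rw [add_comm]
        linarith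
      have h4 : ((k : ℝ) + 1) ≤ 4 * ‖b + (k : ℂ)‖ := by
        nlinarith [norm_nonneg b]
      calc ((k : ℝ) + 1) ≤ 4 * ‖b + (k : ℂ)‖ := h4
        _ ≤ max _ 4 * ‖b + (k : ℂ)‖ :=
          mul_le_mul_of_nonneg_right (le_max_right _ _) (norm_nonneg _)

lemma poch_lower {b : ℂ} {M : ℝ} (hM : ∀ k : ℕ, ((k : ℝ) + 1) ≤ M * ‖b + (k : ℂ)‖)
    (hM1 : 1 ≤ M) (m n : ℕ) :
    (((m + n).factorial : ℝ)) ≤ M ^ n * (m.factorial : ℝ) * ‖poch (b + (m : ℂ)) n‖ := by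
  have h1 : ‖poch (b + (m : ℂ)) n‖ = ∏ k ∈ Finset.range n, ‖b + (m : ℂ) + (k : ℂ)‖ := by
    rw [poch, norm_prod]
  have key : (∏ k ∈ Finset.range n, ((m : ℝ) + k + 1))
      ≤ ∏ k ∈ Finset.range n, (M * ‖b + (m : ℂ) + (k : ℂ)‖) := by
    apply Finset.prod_le_prod (fun k _ => by positivity)
    intro k _
    have := hM (m + k)
    rw [show ((m + k : ℕ) : ℂ) = (m : ℂ) + k by push_cast; ring, ← add_assoc] at this
    calc ((m : ℝ) + k + 1) = ((m + k : ℕ) : ℝ) + 1 := by push_cast; ring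
      _ ≤ M * ‖b + (m : ℂ) + (k : ℂ)‖ := this
  calc (((m + n).factorial : ℝ))
      = (m.factorial : ℝ) * ∏ k ∈ Finset.range n, ((m : ℝ) + k + 1) := by
        rw [← fact_ratio m n]; push_cast; ring
    _ ≤ (m.factorial : ℝ) * ∏ k ∈ Finset.range n, (M * ‖b + (m : ℂ) + (k : ℂ)‖) :=
        mul_le_mul_of_nonneg_left key (by positivity)
    _ = M ^ n * (m.factorial : ℝ) * ‖poch (b + (m : ℂ)) n‖ := by
        rw [h1, Finset.prod_mul_distrib, Finset.prod_const, Finset.card_range]; ring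

/-! ### Pairing bound -/

lemma poch_pair (a b : ℂ) {M : ℝ} (hM : ∀ k : ℕ, ((k : ℝ) + 1) ≤ M * ‖b + (k : ℂ)‖)
    (m m' n : ℕ) (h : m ≤ m') :
    ‖poch (a + (m : ℂ)) n‖ ≤ ((‖a‖ + 1) * M) ^ n * ‖poch (b + (m' : ℂ)) n‖ := by
  have h1 : ‖poch (a + (m : ℂ)) n‖ = ∏ k ∈ Finset.range n, ‖a + (m : ℂ) + (k : ℂ)‖ := by
    rw [poch, norm_prod]
  have h2 : ‖poch (b + (m' : ℂ)) n‖ = ∏ k ∈ Finset.range n, ‖b + (m' : ℂ) + (k : ℂ)‖ := by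
    rw [poch, norm_prod]
  have hM1 : 0 ≤ M := by
    have := hM 0
    have h0 : (0:ℝ) ≤ ‖b + ((0:ℕ) : ℂ)‖ := norm_nonneg _
    nlinarith
  have hpow : ((‖a‖ + 1) * M) ^ n = ∏ _k ∈ Finset.range n, ((‖a‖ + 1) * M) := by simp
  rw [h1, h2, hpow, ← Finset.prod_mul_distrib]
  apply Finset.prod_le_prod (fun k _ => norm_nonneg _)
  intro k _
  have hub : ‖a + (m : ℂ) + (k : ℂ)‖ ≤ (‖a‖ + 1) * ((m' : ℝ) + k + 1) := by
    calc ‖a + (m : ℂ) + (k : ℂ)‖ ≤ ‖a‖ + ‖((m : ℂ) + k)‖ := by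
          rw [add_assoc]; exact norm_add_le _ _
      _ = ‖a‖ + ((m : ℝ) + k) := by
          congr 1
          rw [show ((m : ℂ) + k) = (((m + k : ℕ) : ℂ)) by push_cast; ring, Complex.norm_natCast]
          push_cast; ring
      _ ≤ (‖a‖ + 1) * ((m' : ℝ) + k + 1) := by
          have hmm : (m : ℝ) ≤ (m' : ℝ) := by exact_mod_cast h
          nlinarith [norm_nonneg a, Nat.cast_nonneg (α := ℝ) m', Nat.cast_nonneg (α := ℝ) k]
  have hlb : ((m' : ℝ) + k + 1) ≤ M * ‖b + (m' : ℂ) + (k : ℂ)‖ := by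
    have := hM (m' + k)
    rw [show ((m' + k : ℕ) : ℂ) = (m' : ℂ) + k by push_cast; ring, ← add_assoc] at this
    calc ((m' : ℝ) + k + 1) = ((m' + k : ℕ) : ℝ) + 1 := by push_cast; ring
      _ ≤ M * ‖b + (m' : ℂ) + (k : ℂ)‖ := this
  calc ‖a + (m : ℂ) + (k : ℂ)‖ ≤ (‖a‖ + 1) * ((m' : ℝ) + k + 1) := hub
    _ ≤ (‖a‖ + 1) * (M * ‖b + (m' : ℂ) + (k : ℂ)‖) := by
        apply mul_le_mul_of_nonneg_left hlb (by positivity)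
    _ = (‖a‖ + 1) * M * ‖b + (m' : ℂ) + (k : ℂ)‖ := by ring

lemma poch_pair' (a b : ℂ) {M : ℝ} (hM : ∀ k : ℕ, ((k : ℝ) + 1) ≤ M * ‖b + (k : ℂ)‖) (n : ℕ) :
    ‖poch a n‖ ≤ ((‖a‖ + 1) * M) ^ n * ‖poch b n‖ := by
  have := poch_pair a b hM 0 0 n le_rfl
  simpa using this

lemma poch_inv_le {b : ℂ} {M : ℝ} (hb : ∀ n : ℕ, b ≠ -(n : ℂ))
    (hM : ∀ k : ℕ, ((k : ℝ) + 1) ≤ M * ‖b + (k : ℂ)‖) (hM1 : 1 ≤ M) (n : ℕ) :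
    ‖poch b n‖⁻¹ ≤ M ^ n / (n.factorial : ℝ) := by
  have h0 : (0:ℝ) < ‖poch b n‖ := by
    rw [norm_pos_iff]; exact poch_ne_zero hb n
  have h1 := poch_lower hM hM1 0 n
  simp only [Nat.zero_add, Nat.factorial_zero, Nat.cast_one, mul_one] at h1
  rw [inv_eq_one_div, div_le_div_iff₀ h0 (by positivity)]
  have h2 : ((0 + n).factorial : ℝ) ≤ M ^ n * ((0:ℕ).factorial : ℝ) * ‖poch (b + ((0:ℕ) : ℂ)) n‖ :=
    poch_lower hM hM1 0 n
  simp only [Nat.zero_add, Nat.factorial_zero, Nat.cast_one, mul_one, Nat.cast_zero, add_zero] at h2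
  linarith

/-! ### Auxiliary terms -/

noncomputable def Tt (a₁ a₂ b₁ b₂ x : ℂ) (j₁ j₂ : ℕ) : ℂ :=
  poch (b₁ - a₁) j₁ * poch (b₂ - a₂) j₂ * poch a₂ j₁ / (poch b₁ j₁ * poch b₂ (j₁ + j₂)) *
    ((-x) ^ j₁ / (j₁.factorial : ℂ)) * ((-x) ^ j₂ / (j₂.factorial : ℂ))

noncomputable def Gt (a₁ a₂ b₁ b₂ y : ℂ) (j₁ j₂ i : ℕ) : ℂ :=
  poch a₁ i * poch (a₂ + (j₁ : ℂ)) i /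
      (poch (b₁ + (j₁ : ℂ)) i * poch (b₂ + ((j₁ : ℂ) + (j₂ : ℂ))) i) * y ^ i / (i.factorial : ℂ)

noncomputable def Ft (a₁ a₂ b₁ b₂ x y : ℂ) (i j₁ j₂ l : ℕ) : ℂ :=
  (-1 : ℂ) ^ (j₁ + j₂) * poch (b₁ - a₁) j₁ * poch (b₂ - a₂) j₂ * poch a₁ i * poch a₂ (i + j₁) /
      (poch b₁ (i + j₁) * poch b₂ (i + j₁ + j₂)) * x ^ (j₁ + j₂ + l) * y ^ i /
    ((i.factorial : ℂ) * (j₁.factorial : ℂ) * (j₂.factorial : ℂ) * (l.factorial : ℂ))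

noncomputable def Bt (a₁ a₂ b₁ b₂ x y : ℂ) (i j₁ s : ℕ) : ℂ :=
  (-1 : ℂ) ^ j₁ * poch (b₁ - a₁) j₁ * poch a₁ i * poch a₂ (i + j₁) *
        poch (a₂ + ((i + j₁ : ℕ) : ℂ)) s / (poch b₁ (i + j₁) * poch b₂ (i + j₁ + s)) *
      x ^ (j₁ + s) * y ^ i /
    ((i.factorial : ℂ) * (j₁.factorial : ℂ) * (s.factorial : ℂ))

noncomputable def Pt (a₁ a₂ b₁ b₂ x y : ℂ) (i k : ℕ) : ℂ :=
  poch a₁ (i + k) * poch a₂ (i + k) / (poch b₁ (i + k) * poch b₂ (i + k)) * x ^ k * y ^ i /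
    ((i.factorial : ℂ) * (k.factorial : ℂ))

section main
variable (a₁ a₂ b₁ b₂ x y : ℂ)

set_option maxHeartbeats 1000000 in
lemma key1 (hb₁ : ∀ n : ℕ, b₁ ≠ -(n : ℂ)) (hb₂ : ∀ n : ℕ, b₂ ≠ -(n : ℂ)) (i j₁ s : ℕ) :
    ∑ p ∈ Finset.HasAntidiagonal.antidiagonal s, Ft a₁ a₂ b₁ b₂ x y i j₁ p.1 p.2 = Bt a₁ a₂ b₁ b₂ x y i j₁ s := by
  have hd : ∀ n : ℕ, b₂ + ((i + j₁ : ℕ) : ℂ) ≠ -(n : ℂ) := shift_avoid hb₂ (i + j₁)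
  have main := chu_div (b₂ - a₂) (b₂ + ((i + j₁ : ℕ) : ℂ)) hd s
  have harg : b₂ + ((i + j₁ : ℕ) : ℂ) - (b₂ - a₂) = a₂ + ((i + j₁ : ℕ) : ℂ) := by ring
  rw [harg] at main
  set C : ℂ := (-1 : ℂ) ^ j₁ * poch (b₁ - a₁) j₁ * poch a₁ i * poch a₂ (i + j₁) /
      (poch b₁ (i + j₁) * poch b₂ (i + j₁)) * x ^ (j₁ + s) * y ^ i /
      ((i.factorial : ℂ) * (j₁.factorial : ℂ)) with hC
  have congrstep : ∀ p ∈ Finset.HasAntidiagonal.antidiagonal s, Ft a₁ a₂ b₁ b₂ x y i j₁ p.1 p.2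
      = C * ((-1 : ℂ) ^ p.1 * poch (b₂ - a₂) p.1 /
          ((p.1.factorial : ℂ) * (p.2.factorial : ℂ) * poch (b₂ + ((i + j₁ : ℕ) : ℂ)) p.1)) := by
    rintro ⟨j₂, l⟩ hp
    rw [Finset.HasAntidiagonal.mem_antidiagonal] at hp
    simp only at hp ⊢
    have hx : j₁ + j₂ + l = j₁ + s := by omega
    have hsplit : poch b₂ (i + j₁ + j₂) = poch b₂ (i + j₁) * poch (b₂ + ((i + j₁ : ℕ) : ℂ)) j₂ :=
      poch_add b₂ (i + j₁) j₂
    have n1 : poch b₁ (i + j₁) ≠ 0 := poch_ne_zero hb₁ _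
    have n2 : poch b₂ (i + j₁) ≠ 0 := poch_ne_zero hb₂ _
    have n3 : poch (b₂ + ((i + j₁ : ℕ) : ℂ)) j₂ ≠ 0 := poch_ne_zero hd _
    have n4 : (i.factorial : ℂ) ≠ 0 := Nat.cast_ne_zero.2 (Nat.factorial_ne_zero _)
    have n5 : (j₁.factorial : ℂ) ≠ 0 := Nat.cast_ne_zero.2 (Nat.factorial_ne_zero _)
    have n6 : (j₂.factorial : ℂ) ≠ 0 := Nat.cast_ne_zero.2 (Nat.factorial_ne_zero _)
    have n7 : (l.factorial : ℂ) ≠ 0 := Nat.cast_ne_zero.2 (Nat.factorial_ne_zero _)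
    rw [Ft, hx, hsplit, hC]
    rw [pow_add ((-1 : ℂ)) j₁ j₂]
    field_simp
  rw [Finset.sum_congr rfl congrstep, ← Finset.mul_sum, main]
  have hsplit2 : poch b₂ (i + j₁ + s) = poch b₂ (i + j₁) * poch (b₂ + ((i + j₁ : ℕ) : ℂ)) s :=
    poch_add b₂ (i + j₁) s
  have n1 : poch b₁ (i + j₁) ≠ 0 := poch_ne_zero hb₁ _
  have n2 : poch b₂ (i + j₁) ≠ 0 := poch_ne_zero hb₂ _
  have n3 : poch (b₂ + ((i + j₁ : ℕ) : ℂ)) s ≠ 0 := poch_ne_zero hd _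
  have n4 : (i.factorial : ℂ) ≠ 0 := Nat.cast_ne_zero.2 (Nat.factorial_ne_zero _)
  have n5 : (j₁.factorial : ℂ) ≠ 0 := Nat.cast_ne_zero.2 (Nat.factorial_ne_zero _)
  have n6 : (s.factorial : ℂ) ≠ 0 := Nat.cast_ne_zero.2 (Nat.factorial_ne_zero _)
  rw [Bt, hsplit2, hC]
  field_simp

set_option maxHeartbeats 1000000 in
lemma key2 (hb₁ : ∀ n : ℕ, b₁ ≠ -(n : ℂ)) (hb₂ : ∀ n : ℕ, b₂ ≠ -(n : ℂ)) (i k : ℕ) :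
    ∑ p ∈ Finset.HasAntidiagonal.antidiagonal k, Bt a₁ a₂ b₁ b₂ x y i p.1 p.2 = Pt a₁ a₂ b₁ b₂ x y i k := by
  have hd : ∀ n : ℕ, b₁ + ((i : ℕ) : ℂ) ≠ -(n : ℂ) := shift_avoid hb₁ i
  have main := chu_div (b₁ - a₁) (b₁ + ((i : ℕ) : ℂ)) hd k
  have harg : b₁ + ((i : ℕ) : ℂ) - (b₁ - a₁) = a₁ + ((i : ℕ) : ℂ) := by ring
  rw [harg] at main
  set C : ℂ := poch a₁ i * poch a₂ (i + k) * x ^ k * y ^ i /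
      (poch b₁ i * poch b₂ (i + k) * (i.factorial : ℂ)) with hC
  have congrstep : ∀ p ∈ Finset.HasAntidiagonal.antidiagonal k, Bt a₁ a₂ b₁ b₂ x y i p.1 p.2
      = C * ((-1 : ℂ) ^ p.1 * poch (b₁ - a₁) p.1 /
          ((p.1.factorial : ℂ) * (p.2.factorial : ℂ) * poch (b₁ + ((i : ℕ) : ℂ)) p.1)) := by
    rintro ⟨j₁, s⟩ hp
    rw [Finset.HasAntidiagonal.mem_antidiagonal] at hp
    simp only at hp ⊢
    have hx : j₁ + s = k := hp
    have e1 : poch a₂ (i + k) = poch a₂ (i + j₁) * poch (a₂ + ((i + j₁ : ℕ) : ℂ)) s := by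
      rw [← poch_add]; congr 1; omega
    have e2 : poch b₂ (i + j₁ + s) = poch b₂ (i + k) := by congr 1; omega
    have e3 : poch b₁ (i + j₁) = poch b₁ i * poch (b₁ + ((i : ℕ) : ℂ)) j₁ := poch_add b₁ i j₁
    have n1 : poch b₁ i ≠ 0 := poch_ne_zero hb₁ _
    have n2 : poch b₂ (i + k) ≠ 0 := poch_ne_zero hb₂ _
    have n3 : poch (b₁ + ((i : ℕ) : ℂ)) j₁ ≠ 0 := poch_ne_zero hd _
    have n4 : (i.factorial : ℂ) ≠ 0 := Nat.cast_ne_zero.2 (Nat.factorial_ne_zero _)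
    have n5 : (j₁.factorial : ℂ) ≠ 0 := Nat.cast_ne_zero.2 (Nat.factorial_ne_zero _)
    have n6 : (s.factorial : ℂ) ≠ 0 := Nat.cast_ne_zero.2 (Nat.factorial_ne_zero _)
    rw [Bt, hx, e2, e3, hC, e1]
    field_simp
  rw [Finset.sum_congr rfl congrstep, ← Finset.mul_sum, main]
  have e4 : poch a₁ (i + k) = poch a₁ i * poch (a₁ + ((i : ℕ) : ℂ)) k := poch_add a₁ i k
  have e5 : poch b₁ (i + k) = poch b₁ i * poch (b₁ + ((i : ℕ) : ℂ)) k := poch_add b₁ i k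
  have n1 : poch b₁ i ≠ 0 := poch_ne_zero hb₁ _
  have n2 : poch b₂ (i + k) ≠ 0 := poch_ne_zero hb₂ _
  have n3 : poch (b₁ + ((i : ℕ) : ℂ)) k ≠ 0 := poch_ne_zero hd _
  have n4 : (i.factorial : ℂ) ≠ 0 := Nat.cast_ne_zero.2 (Nat.factorial_ne_zero _)
  have n5 : (k.factorial : ℂ) ≠ 0 := Nat.cast_ne_zero.2 (Nat.factorial_ne_zero _)
  rw [Pt, e4, e5, hC]
  field_simp

set_option maxHeartbeats 1000000 in
lemma WF_eq (hb₁ : ∀ n : ℕ, b₁ ≠ -(n : ℂ)) (hb₂ : ∀ n : ℕ, b₂ ≠ -(n : ℂ)) (j₁ j₂ i l : ℕ) :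
    x ^ l / (l.factorial : ℂ) * (Tt a₁ a₂ b₁ b₂ x j₁ j₂ * Gt a₁ a₂ b₁ b₂ y j₁ j₂ i)
      = Ft a₁ a₂ b₁ b₂ x y i j₁ j₂ l := by
  have e1 : poch a₂ (i + j₁) = poch a₂ j₁ * poch (a₂ + (j₁ : ℂ)) i := by
    rw [add_comm i j₁]; exact poch_add a₂ j₁ i
  have e2 : poch b₁ (i + j₁) = poch b₁ j₁ * poch (b₁ + (j₁ : ℂ)) i := by
    rw [add_comm i j₁]; exact poch_add b₁ j₁ i
  have e3 : poch b₂ (i + j₁ + j₂) = poch b₂ (j₁ + j₂) * poch (b₂ + ((j₁ : ℂ) + (j₂ : ℂ))) i := by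
    rw [show i + j₁ + j₂ = (j₁ + j₂) + i by omega, poch_add]
    congr 2
    push_cast; ring
  have n1 : poch b₁ j₁ ≠ 0 := poch_ne_zero hb₁ _
  have n2 : poch b₂ (j₁ + j₂) ≠ 0 := poch_ne_zero hb₂ _
  have n3 : poch (b₁ + (j₁ : ℂ)) i ≠ 0 := poch_ne_zero (shift_avoid hb₁ j₁) _
  have n4 : poch (b₂ + ((j₁ : ℂ) + (j₂ : ℂ))) i ≠ 0 := by
    have := poch_ne_zero (shift_avoid hb₂ (j₁ + j₂)) i
    rwa [show ((j₁ + j₂ : ℕ) : ℂ) = (j₁ : ℂ) + (j₂ : ℂ) by push_cast; ring] at this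
  have n5 : (i.factorial : ℂ) ≠ 0 := Nat.cast_ne_zero.2 (Nat.factorial_ne_zero _)
  have n6 : (j₁.factorial : ℂ) ≠ 0 := Nat.cast_ne_zero.2 (Nat.factorial_ne_zero _)
  have n7 : (j₂.factorial : ℂ) ≠ 0 := Nat.cast_ne_zero.2 (Nat.factorial_ne_zero _)
  have n8 : (l.factorial : ℂ) ≠ 0 := Nat.cast_ne_zero.2 (Nat.factorial_ne_zero _)
  have hx1 : (-x) ^ j₁ = (-1 : ℂ) ^ j₁ * x ^ j₁ := by rw [neg_pow]
  have hx2 : (-x) ^ j₂ = (-1 : ℂ) ^ j₂ * x ^ j₂ := by rw [neg_pow]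
  have hx3 : x ^ (j₁ + j₂ + l) = x ^ j₁ * x ^ j₂ * x ^ l := by rw [pow_add, pow_add]
  have hx4 : (-1 : ℂ) ^ (j₁ + j₂) = (-1 : ℂ) ^ j₁ * (-1 : ℂ) ^ j₂ := by rw [pow_add]
  rw [Ft, Tt, Gt, e1, e2, e3, hx1, hx2, hx3, hx4]
  field_simp

set_option maxHeartbeats 1000000 in
lemma lhs_term (hb₁ : ∀ n : ℕ, b₁ ≠ -(n : ℂ)) (hb₂ : ∀ n : ℕ, b₂ ≠ -(n : ℂ)) (n : ℕ) :
    poch a₁ n * poch a₂ n / (poch b₁ n * poch b₂ n) * (x + y) ^ n / (n.factorial : ℂ)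
      = ∑ p ∈ Finset.HasAntidiagonal.antidiagonal n, Pt a₁ a₂ b₁ b₂ x y p.2 p.1 := by
  rw [Finset.Nat.sum_antidiagonal_eq_sum_range_succ_mk]
  rw [add_pow, Finset.mul_sum, Finset.sum_div]
  apply Finset.sum_congr rfl
  intro k hk
  rw [Finset.mem_range] at hk
  have hkn : k ≤ n := by omega
  have e0 : n - k + k = n := by omega
  have hfac : (n.choose k : ℂ) * (k.factorial : ℂ) * ((n - k).factorial : ℂ) = (n.factorial : ℂ) := by
    rw [← Nat.cast_mul, ← Nat.cast_mul, Nat.choose_mul_factorial_mul_factorial hkn]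
  have n4 : (k.factorial : ℂ) ≠ 0 := Nat.cast_ne_zero.2 (Nat.factorial_ne_zero _)
  have n5 : ((n - k).factorial : ℂ) ≠ 0 := Nat.cast_ne_zero.2 (Nat.factorial_ne_zero _)
  have n6 : (n.factorial : ℂ) ≠ 0 := Nat.cast_ne_zero.2 (Nat.factorial_ne_zero _)
  have nb1 : poch b₁ n ≠ 0 := poch_ne_zero hb₁ _
  have nb2 : poch b₂ n ≠ 0 := poch_ne_zero hb₂ _
  rw [Pt, e0]
  field_simp
  linear_combination (poch a₁ n * poch a₂ n * x ^ k * y ^ (n - k)) * hfac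

end main

/-! ### Summability machinery -/

lemma norm_ratio_le (u v : ℂ) (K : ℝ) (hv : v ≠ 0) (h : ‖u‖ ≤ K * ‖v‖) : ‖u / v‖ ≤ K := by
  rw [norm_div, div_le_iff₀ (norm_pos_iff.2 hv)]
  exact h

lemma summable_aux2 {f : ℕ × ℕ → ℂ} (C R₁ R₂ : ℝ) (hC : 0 ≤ C) (h1 : 0 ≤ R₁) (h2 : 0 ≤ R₂)
    (h : ∀ p : ℕ × ℕ, ‖f p‖ ≤ C * (R₁ ^ p.1 / p.1.factorial) * (R₂ ^ p.2 / p.2.factorial)) :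
    Summable fun p => ‖f p‖ := by
  have hR₁ : Summable fun n : ℕ => R₁ ^ n / n.factorial := Real.summable_pow_div_factorial _
  have hR₂ : Summable fun n : ℕ => R₂ ^ n / n.factorial := Real.summable_pow_div_factorial _
  have hbase : Summable fun p : ℕ × ℕ =>
      (R₁ ^ p.1 / p.1.factorial) * (R₂ ^ p.2 / p.2.factorial) :=
    hR₁.mul_of_nonneg hR₂ (fun n => by positivity) (fun n => by positivity)
  apply Summable.of_nonneg_of_le (fun p => norm_nonneg _) _ (hbase.mul_left C)
  intro p
  calc ‖f p‖ ≤ C * (R₁ ^ p.1 / p.1.factorial) * (R₂ ^ p.2 / p.2.factorial) := h p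
    _ = C * ((R₁ ^ p.1 / p.1.factorial) * (R₂ ^ p.2 / p.2.factorial)) := by ring

set_option maxHeartbeats 800000 in
lemma summable_aux3 {f : (ℕ × ℕ) × ℕ → ℂ} (C R₁ R₂ R₃ : ℝ) (hC : 0 ≤ C) (h1 : 0 ≤ R₁)
    (h2 : 0 ≤ R₂) (h3 : 0 ≤ R₃)
    (h : ∀ p : (ℕ × ℕ) × ℕ, ‖f p‖ ≤ C * (R₁ ^ p.1.1 / p.1.1.factorial)
        * (R₂ ^ p.1.2 / p.1.2.factorial) * (R₃ ^ p.2 / p.2.factorial)) :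
    Summable fun p => ‖f p‖ := by
  have hR₁ : Summable fun n : ℕ => R₁ ^ n / n.factorial := Real.summable_pow_div_factorial _
  have hR₂ : Summable fun n : ℕ => R₂ ^ n / n.factorial := Real.summable_pow_div_factorial _
  have hR₃ : Summable fun n : ℕ => R₃ ^ n / n.factorial := Real.summable_pow_div_factorial _
  have hb1 : Summable fun p : ℕ × ℕ =>
      (R₁ ^ p.1 / p.1.factorial) * (R₂ ^ p.2 / p.2.factorial) :=
    hR₁.mul_of_nonneg hR₂ (fun n => by positivity) (fun n => by positivity)
  have hbase : Summable fun p : (ℕ × ℕ) × ℕ =>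
      ((R₁ ^ p.1.1 / p.1.1.factorial) * (R₂ ^ p.1.2 / p.1.2.factorial))
        * (R₃ ^ p.2 / p.2.factorial) :=
    hb1.mul_of_nonneg hR₃ (fun p => by positivity) (fun n => by positivity)
  apply Summable.of_nonneg_of_le (fun p => norm_nonneg _) _ (hbase.mul_left C)
  intro p
  calc ‖f p‖ ≤ C * (R₁ ^ p.1.1 / p.1.1.factorial) * (R₂ ^ p.1.2 / p.1.2.factorial)
        * (R₃ ^ p.2 / p.2.factorial) := h p
    _ = C * ((R₁ ^ p.1.1 / p.1.1.factorial) * (R₂ ^ p.1.2 / p.1.2.factorial)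
        * (R₃ ^ p.2 / p.2.factorial)) := by ring

section bounds
variable (a₁ a₂ b₁ b₂ x y : ℂ) {M₁ M₂ : ℝ}

lemma summable_P (hb₁ : ∀ n : ℕ, b₁ ≠ -(n : ℂ)) (hb₂ : ∀ n : ℕ, b₂ ≠ -(n : ℂ))
    (hM₁ : ∀ k : ℕ, ((k : ℝ) + 1) ≤ M₁ * ‖b₁ + (k : ℂ)‖)
    (hM₂ : ∀ k : ℕ, ((k : ℝ) + 1) ≤ M₂ * ‖b₂ + (k : ℂ)‖)
    (hM₁1 : 1 ≤ M₁) (hM₂1 : 1 ≤ M₂) :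
    Summable fun p : ℕ × ℕ => ‖Pt a₁ a₂ b₁ b₂ x y p.1 p.2‖ := by
  have hM₁0 : (0:ℝ) ≤ M₁ := by linarith
  have hM₂0 : (0:ℝ) ≤ M₂ := by linarith
  set Q : ℝ := (‖a₁‖ + 1) * M₁ * ((‖a₂‖ + 1) * M₂) with hQ
  have hQ0 : 0 ≤ Q := by rw [hQ]; positivity
  apply summable_aux2 1 (Q * ‖y‖) (Q * ‖x‖) (by norm_num) (by positivity) (by positivity)
  rintro ⟨i, k⟩
  simp only [Pt, norm_div, norm_mul, norm_pow, Complex.norm_natCast]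
  have hv : poch b₁ (i + k) * poch b₂ (i + k) ≠ 0 :=
    mul_ne_zero (poch_ne_zero hb₁ _) (poch_ne_zero hb₂ _)
  have hdiv : ‖poch a₁ (i + k)‖ * ‖poch a₂ (i + k)‖ / (‖poch b₁ (i + k)‖ * ‖poch b₂ (i + k)‖)
      ≤ Q ^ (i + k) := by
    rw [div_le_iff₀ (by rw [← norm_mul]; exact norm_pos_iff.2 hv)]
    calc ‖poch a₁ (i + k)‖ * ‖poch a₂ (i + k)‖
        ≤ (((‖a₁‖ + 1) * M₁) ^ (i + k) * ‖poch b₁ (i + k)‖)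
          * (((‖a₂‖ + 1) * M₂) ^ (i + k) * ‖poch b₂ (i + k)‖) :=
          mul_le_mul (poch_pair' a₁ b₁ hM₁ _) (poch_pair' a₂ b₂ hM₂ _)
            (norm_nonneg _)
            (mul_nonneg (pow_nonneg (by positivity) _) (norm_nonneg _))
      _ = Q ^ (i + k) * (‖poch b₁ (i + k)‖ * ‖poch b₂ (i + k)‖) := by
          rw [hQ]; simp only [mul_pow]; ring
  have hfk : (0:ℝ) < (i.factorial : ℝ) * (k.factorial : ℝ) := by positivity
  clear_value Q
  calc ‖poch a₁ (i + k)‖ * ‖poch a₂ (i + k)‖ / (‖poch b₁ (i + k)‖ * ‖poch b₂ (i + k)‖)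
        * ‖x‖ ^ k * ‖y‖ ^ i / ((i.factorial : ℝ) * (k.factorial : ℝ))
      ≤ Q ^ (i + k) * ‖x‖ ^ k * ‖y‖ ^ i / ((i.factorial : ℝ) * (k.factorial : ℝ)) := by
        gcongr
    _ = 1 * ((Q * ‖y‖) ^ i / (i.factorial : ℝ)) * ((Q * ‖x‖) ^ k / (k.factorial : ℝ)) := by
        rw [pow_add]
        simp only [mul_pow]
        field_simp
end bounds

section bounds2
variable (a₁ a₂ b₁ b₂ x y : ℂ) {M₁ M₂ : ℝ}

set_option maxHeartbeats 1000000 in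
lemma summable_B (hb₁ : ∀ n : ℕ, b₁ ≠ -(n : ℂ)) (hb₂ : ∀ n : ℕ, b₂ ≠ -(n : ℂ))
    (hM₁ : ∀ k : ℕ, ((k : ℝ) + 1) ≤ M₁ * ‖b₁ + (k : ℂ)‖)
    (hM₂ : ∀ k : ℕ, ((k : ℝ) + 1) ≤ M₂ * ‖b₂ + (k : ℂ)‖)
    (hM₁1 : 1 ≤ M₁) (hM₂1 : 1 ≤ M₂) (i : ℕ) :
    Summable fun p : ℕ × ℕ => ‖Bt a₁ a₂ b₁ b₂ x y i p.1 p.2‖ := by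
  have hM₁0 : (0:ℝ) ≤ M₁ := by linarith
  have hM₂0 : (0:ℝ) ≤ M₂ := by linarith
  have hK1 : (0:ℝ) ≤ (‖a₂‖ + 1) * M₁ := by positivity
  have hK3 : (0:ℝ) ≤ (‖a₂‖ + 1) * M₂ := by positivity
  apply summable_aux2 (((‖a₁‖ + 1) * ((‖a₂‖ + 1) * M₁) * M₂ * ‖y‖) ^ i / (i.factorial : ℝ))
      ((‖b₁ - a₁‖ + 1) * ((‖a₂‖ + 1) * M₁) * M₂ * ‖x‖) ((‖a₂‖ + 1) * M₂ * ‖x‖)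
      (by positivity) (by positivity) (by positivity)
  rintro ⟨j₁, s⟩
  rw [Bt, poch_add b₂ (i + j₁) s]
  simp only [norm_div, norm_mul, norm_pow, norm_neg, norm_one, one_pow, Complex.norm_natCast,
    one_mul]
  have nb1 : (0:ℝ) < ‖poch b₁ (i + j₁)‖ := norm_pos_iff.2 (poch_ne_zero hb₁ _)
  have nb2 : (0:ℝ) < ‖poch b₂ (i + j₁)‖ := norm_pos_iff.2 (poch_ne_zero hb₂ _)
  have nbs : (0:ℝ) < ‖poch (b₂ + ((i + j₁ : ℕ) : ℂ)) s‖ :=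
    norm_pos_iff.2 (poch_ne_zero (shift_avoid hb₂ _) _)
  have h2 : ‖poch (b₁ - a₁) j₁‖ ≤ (‖b₁ - a₁‖ + 1) ^ j₁ * (j₁.factorial : ℝ) := norm_poch_le _ _
  have h3 : ‖poch a₁ i‖ ≤ (‖a₁‖ + 1) ^ i * (i.factorial : ℝ) := norm_poch_le _ _
  have h4 : ‖poch a₂ (i + j₁)‖ ≤ ((‖a₂‖ + 1) * M₁) ^ (i + j₁) * ‖poch b₁ (i + j₁)‖ :=
    poch_pair' a₂ b₁ hM₁ _
  have h5 : ‖poch (a₂ + ((i + j₁ : ℕ) : ℂ)) s‖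
      ≤ ((‖a₂‖ + 1) * M₂) ^ s * ‖poch (b₂ + ((i + j₁ : ℕ) : ℂ)) s‖ :=
    poch_pair a₂ b₂ hM₂ (i + j₁) (i + j₁) s le_rfl
  have hx1 : (1:ℝ) ≤ M₂ ^ (i + j₁) / ((i + j₁).factorial : ℝ) * ‖poch b₂ (i + j₁)‖ := by
    have h6 : ‖poch b₂ (i + j₁)‖⁻¹ ≤ M₂ ^ (i + j₁) / ((i + j₁).factorial : ℝ) :=
      poch_inv_le hb₂ hM₂ hM₂1 _
    calc (1:ℝ) = ‖poch b₂ (i + j₁)‖⁻¹ * ‖poch b₂ (i + j₁)‖ := (inv_mul_cancel₀ nb2.ne').symm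
      _ ≤ M₂ ^ (i + j₁) / ((i + j₁).factorial : ℝ) * ‖poch b₂ (i + j₁)‖ :=
        mul_le_mul_of_nonneg_right h6 nb2.le
  have h7 : ((i.factorial : ℝ) * (j₁.factorial : ℝ)) ≤ ((i + j₁).factorial : ℝ) := by
    rw [← Nat.cast_mul]
    exact_mod_cast Nat.le_of_dvd (Nat.factorial_pos _)
      (Nat.factorial_mul_factorial_dvd_factorial_add i j₁)
  set N' : ℝ := (‖b₁ - a₁‖ + 1) ^ j₁ * (j₁.factorial : ℝ) * ((‖a₁‖ + 1) ^ i * (i.factorial : ℝ))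
      * ((‖a₂‖ + 1) * M₁) ^ (i + j₁) * ((‖a₂‖ + 1) * M₂) ^ s with hN'
  have hN'0 : 0 ≤ N' := by rw [hN']; positivity
  have hND : ‖poch (b₁ - a₁) j₁‖ * ‖poch a₁ i‖ * ‖poch a₂ (i + j₁)‖
        * ‖poch (a₂ + ((i + j₁ : ℕ) : ℂ)) s‖
        / (‖poch b₁ (i + j₁)‖ * (‖poch b₂ (i + j₁)‖ * ‖poch (b₂ + ((i + j₁ : ℕ) : ℂ)) s‖))
      ≤ N' * (M₂ ^ (i + j₁) / ((i + j₁).factorial : ℝ)) := by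
    rw [div_le_iff₀ (by positivity)]
    calc ‖poch (b₁ - a₁) j₁‖ * ‖poch a₁ i‖ * ‖poch a₂ (i + j₁)‖
          * ‖poch (a₂ + ((i + j₁ : ℕ) : ℂ)) s‖
        ≤ ((‖b₁ - a₁‖ + 1) ^ j₁ * (j₁.factorial : ℝ)) * ((‖a₁‖ + 1) ^ i * (i.factorial : ℝ))
          * (((‖a₂‖ + 1) * M₁) ^ (i + j₁) * ‖poch b₁ (i + j₁)‖)
          * (((‖a₂‖ + 1) * M₂) ^ s * ‖poch (b₂ + ((i + j₁ : ℕ) : ℂ)) s‖) := by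
          apply mul_le_mul (mul_le_mul (mul_le_mul h2 h3 (norm_nonneg _) (by positivity))
            h4 (norm_nonneg _) (by positivity)) h5 (norm_nonneg _) (by positivity)
      _ = N' * (‖poch b₁ (i + j₁)‖ * ‖poch (b₂ + ((i + j₁ : ℕ) : ℂ)) s‖) := by
          rw [hN']; ring
      _ ≤ N' * (‖poch b₁ (i + j₁)‖ * ‖poch (b₂ + ((i + j₁ : ℕ) : ℂ)) s‖)
          * (M₂ ^ (i + j₁) / ((i + j₁).factorial : ℝ) * ‖poch b₂ (i + j₁)‖) :=
          le_mul_of_one_le_right (by positivity) hx1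
      _ = N' * (M₂ ^ (i + j₁) / ((i + j₁).factorial : ℝ))
          * (‖poch b₁ (i + j₁)‖ * (‖poch b₂ (i + j₁)‖ * ‖poch (b₂ + ((i + j₁ : ℕ) : ℂ)) s‖)) := by
          ring
  calc ‖poch (b₁ - a₁) j₁‖ * ‖poch a₁ i‖ * ‖poch a₂ (i + j₁)‖
          * ‖poch (a₂ + ((i + j₁ : ℕ) : ℂ)) s‖
          / (‖poch b₁ (i + j₁)‖ * (‖poch b₂ (i + j₁)‖ * ‖poch (b₂ + ((i + j₁ : ℕ) : ℂ)) s‖))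
          * ‖x‖ ^ (j₁ + s) * ‖y‖ ^ i
          / ((i.factorial : ℝ) * (j₁.factorial : ℝ) * (s.factorial : ℝ))
      ≤ N' * (M₂ ^ (i + j₁) / ((i + j₁).factorial : ℝ)) * ‖x‖ ^ (j₁ + s) * ‖y‖ ^ i
          / ((i.factorial : ℝ) * (j₁.factorial : ℝ) * (s.factorial : ℝ)) := by
        gcongr
    _ ≤ N' * (M₂ ^ (i + j₁) / ((i.factorial : ℝ) * (j₁.factorial : ℝ))) * ‖x‖ ^ (j₁ + s)
          * ‖y‖ ^ i / ((i.factorial : ℝ) * (j₁.factorial : ℝ) * (s.factorial : ℝ)) := by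
        gcongr
    _ = ((‖a₁‖ + 1) * ((‖a₂‖ + 1) * M₁) * M₂ * ‖y‖) ^ i / (i.factorial : ℝ)
          * ((((‖b₁ - a₁‖ + 1) * ((‖a₂‖ + 1) * M₁) * M₂ * ‖x‖)) ^ j₁ / (j₁.factorial : ℝ))
          * (((‖a₂‖ + 1) * M₂ * ‖x‖) ^ s / (s.factorial : ℝ)) := by
        rw [hN']
        simp only [pow_add, mul_pow]
        field_simp

end bounds2

section bounds3
variable (a₁ a₂ b₁ b₂ x y : ℂ) {M₁ M₂ : ℝ}

set_option maxHeartbeats 1000000 in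
lemma norm_G_le (hb₁ : ∀ n : ℕ, b₁ ≠ -(n : ℂ)) (hb₂ : ∀ n : ℕ, b₂ ≠ -(n : ℂ))
    (hM₁ : ∀ k : ℕ, ((k : ℝ) + 1) ≤ M₁ * ‖b₁ + (k : ℂ)‖)
    (hM₂ : ∀ k : ℕ, ((k : ℝ) + 1) ≤ M₂ * ‖b₂ + (k : ℂ)‖)
    (hM₁1 : 1 ≤ M₁) (hM₂1 : 1 ≤ M₂) (j₁ j₂ i : ℕ) :
    ‖Gt a₁ a₂ b₁ b₂ y j₁ j₂ i‖
      ≤ ((‖a₂‖ + 1) * M₁ * ((‖a₁‖ + 1) * M₂) * ‖y‖) ^ i / (i.factorial : ℝ) := by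
  have hM₁0 : (0:ℝ) ≤ M₁ := by linarith
  have hM₂0 : (0:ℝ) ≤ M₂ := by linarith
  have hcast : ((j₁ + j₂ : ℕ) : ℂ) = (j₁ : ℂ) + (j₂ : ℂ) := by push_cast; ring
  have ns1 : (0:ℝ) < ‖poch (b₁ + (j₁ : ℂ)) i‖ :=
    norm_pos_iff.2 (poch_ne_zero (shift_avoid hb₁ _) _)
  have ns2 : (0:ℝ) < ‖poch (b₂ + ((j₁ : ℂ) + (j₂ : ℂ))) i‖ := by
    rw [← hcast]
    exact norm_pos_iff.2 (poch_ne_zero (shift_avoid hb₂ _) _)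
  have h1 : ‖poch a₁ i‖ ≤ ((‖a₁‖ + 1) * M₂) ^ i * ‖poch (b₂ + ((j₁ : ℂ) + (j₂ : ℂ))) i‖ := by
    have := poch_pair a₁ b₂ hM₂ 0 (j₁ + j₂) i (Nat.zero_le _)
    rw [hcast] at this
    simpa using this
  have h2 : ‖poch (a₂ + (j₁ : ℂ)) i‖ ≤ ((‖a₂‖ + 1) * M₁) ^ i * ‖poch (b₁ + (j₁ : ℂ)) i‖ :=
    poch_pair a₂ b₁ hM₁ j₁ j₁ i le_rfl
  rw [Gt]
  simp only [norm_div, norm_mul, norm_pow, Complex.norm_natCast]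
  have hr : ‖poch a₁ i‖ * ‖poch (a₂ + (j₁ : ℂ)) i‖
      / (‖poch (b₁ + (j₁ : ℂ)) i‖ * ‖poch (b₂ + ((j₁ : ℂ) + (j₂ : ℂ))) i‖)
      ≤ ((‖a₂‖ + 1) * M₁) ^ i * ((‖a₁‖ + 1) * M₂) ^ i := by
    rw [div_le_iff₀ (by positivity)]
    calc ‖poch a₁ i‖ * ‖poch (a₂ + (j₁ : ℂ)) i‖
        ≤ (((‖a₁‖ + 1) * M₂) ^ i * ‖poch (b₂ + ((j₁ : ℂ) + (j₂ : ℂ))) i‖)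
          * (((‖a₂‖ + 1) * M₁) ^ i * ‖poch (b₁ + (j₁ : ℂ)) i‖) :=
          mul_le_mul h1 h2 (norm_nonneg _)
            (mul_nonneg (pow_nonneg (by positivity) _) (norm_nonneg _))
      _ = ((‖a₂‖ + 1) * M₁) ^ i * ((‖a₁‖ + 1) * M₂) ^ i
          * (‖poch (b₁ + (j₁ : ℂ)) i‖ * ‖poch (b₂ + ((j₁ : ℂ) + (j₂ : ℂ))) i‖) := by ring
  calc ‖poch a₁ i‖ * ‖poch (a₂ + (j₁ : ℂ)) i‖
        / (‖poch (b₁ + (j₁ : ℂ)) i‖ * ‖poch (b₂ + ((j₁ : ℂ) + (j₂ : ℂ))) i‖) * ‖y‖ ^ i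
        / (i.factorial : ℝ)
      ≤ ((‖a₂‖ + 1) * M₁) ^ i * ((‖a₁‖ + 1) * M₂) ^ i * ‖y‖ ^ i / (i.factorial : ℝ) := by
        gcongr
    _ = ((‖a₂‖ + 1) * M₁ * ((‖a₁‖ + 1) * M₂) * ‖y‖) ^ i / (i.factorial : ℝ) := by
        simp only [mul_pow]

set_option maxHeartbeats 1000000 in
lemma norm_T_le (hb₁ : ∀ n : ℕ, b₁ ≠ -(n : ℂ)) (hb₂ : ∀ n : ℕ, b₂ ≠ -(n : ℂ))
    (hM₁ : ∀ k : ℕ, ((k : ℝ) + 1) ≤ M₁ * ‖b₁ + (k : ℂ)‖)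
    (hM₂ : ∀ k : ℕ, ((k : ℝ) + 1) ≤ M₂ * ‖b₂ + (k : ℂ)‖)
    (hM₁1 : 1 ≤ M₁) (hM₂1 : 1 ≤ M₂) (j₁ j₂ : ℕ) :
    ‖Tt a₁ a₂ b₁ b₂ x j₁ j₂‖
      ≤ ((‖b₁ - a₁‖ + 1) * ((‖a₂‖ + 1) * M₁) * M₂ * ‖x‖) ^ j₁ / (j₁.factorial : ℝ)
        * (((‖b₂ - a₂‖ + 1) * M₂ * ‖x‖) ^ j₂ / (j₂.factorial : ℝ)) := by
  have hM₁0 : (0:ℝ) ≤ M₁ := by linarith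
  have hM₂0 : (0:ℝ) ≤ M₂ := by linarith
  have nq1 : (0:ℝ) < ‖poch b₁ j₁‖ := norm_pos_iff.2 (poch_ne_zero hb₁ _)
  have nq2 : (0:ℝ) < ‖poch b₂ (j₁ + j₂)‖ := norm_pos_iff.2 (poch_ne_zero hb₂ _)
  have h1 : ‖poch (b₁ - a₁) j₁‖ ≤ (‖b₁ - a₁‖ + 1) ^ j₁ * (j₁.factorial : ℝ) := norm_poch_le _ _
  have h2 : ‖poch (b₂ - a₂) j₂‖ ≤ (‖b₂ - a₂‖ + 1) ^ j₂ * (j₂.factorial : ℝ) := norm_poch_le _ _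
  have h3 : ‖poch a₂ j₁‖ ≤ ((‖a₂‖ + 1) * M₁) ^ j₁ * ‖poch b₁ j₁‖ := poch_pair' a₂ b₁ hM₁ _
  have hx1 : (1:ℝ) ≤ M₂ ^ (j₁ + j₂) / ((j₁ + j₂).factorial : ℝ) * ‖poch b₂ (j₁ + j₂)‖ := by
    have h6 : ‖poch b₂ (j₁ + j₂)‖⁻¹ ≤ M₂ ^ (j₁ + j₂) / ((j₁ + j₂).factorial : ℝ) :=
      poch_inv_le hb₂ hM₂ hM₂1 _
    calc (1:ℝ) = ‖poch b₂ (j₁ + j₂)‖⁻¹ * ‖poch b₂ (j₁ + j₂)‖ := (inv_mul_cancel₀ nq2.ne').symm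
      _ ≤ _ := mul_le_mul_of_nonneg_right h6 nq2.le
  have h7 : ((j₁.factorial : ℝ) * (j₂.factorial : ℝ)) ≤ ((j₁ + j₂).factorial : ℝ) := by
    rw [← Nat.cast_mul]
    exact_mod_cast Nat.le_of_dvd (Nat.factorial_pos _)
      (Nat.factorial_mul_factorial_dvd_factorial_add j₁ j₂)
  rw [Tt]
  simp only [norm_div, norm_mul, norm_pow, norm_neg, Complex.norm_natCast]
  have hr : ‖poch (b₁ - a₁) j₁‖ * ‖poch (b₂ - a₂) j₂‖ * ‖poch a₂ j₁‖
      / (‖poch b₁ j₁‖ * ‖poch b₂ (j₁ + j₂)‖)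
      ≤ (‖b₁ - a₁‖ + 1) ^ j₁ * (j₁.factorial : ℝ) * ((‖b₂ - a₂‖ + 1) ^ j₂ * (j₂.factorial : ℝ))
        * ((‖a₂‖ + 1) * M₁) ^ j₁ * (M₂ ^ (j₁ + j₂) / ((j₁ + j₂).factorial : ℝ)) := by
    rw [div_le_iff₀ (by positivity)]
    calc ‖poch (b₁ - a₁) j₁‖ * ‖poch (b₂ - a₂) j₂‖ * ‖poch a₂ j₁‖
        ≤ ((‖b₁ - a₁‖ + 1) ^ j₁ * (j₁.factorial : ℝ))
          * ((‖b₂ - a₂‖ + 1) ^ j₂ * (j₂.factorial : ℝ))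
          * (((‖a₂‖ + 1) * M₁) ^ j₁ * ‖poch b₁ j₁‖) := by
          apply mul_le_mul (mul_le_mul h1 h2 (norm_nonneg _) (by positivity)) h3
            (norm_nonneg _) (by positivity)
      _ ≤ ((‖b₁ - a₁‖ + 1) ^ j₁ * (j₁.factorial : ℝ))
          * ((‖b₂ - a₂‖ + 1) ^ j₂ * (j₂.factorial : ℝ))
          * (((‖a₂‖ + 1) * M₁) ^ j₁ * ‖poch b₁ j₁‖)
          * (M₂ ^ (j₁ + j₂) / ((j₁ + j₂).factorial : ℝ) * ‖poch b₂ (j₁ + j₂)‖) :=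
          le_mul_of_one_le_right (by positivity) hx1
      _ = (‖b₁ - a₁‖ + 1) ^ j₁ * (j₁.factorial : ℝ) * ((‖b₂ - a₂‖ + 1) ^ j₂ * (j₂.factorial : ℝ))
          * ((‖a₂‖ + 1) * M₁) ^ j₁ * (M₂ ^ (j₁ + j₂) / ((j₁ + j₂).factorial : ℝ))
          * (‖poch b₁ j₁‖ * ‖poch b₂ (j₁ + j₂)‖) := by ring
  calc ‖poch (b₁ - a₁) j₁‖ * ‖poch (b₂ - a₂) j₂‖ * ‖poch a₂ j₁‖
        / (‖poch b₁ j₁‖ * ‖poch b₂ (j₁ + j₂)‖) * (‖x‖ ^ j₁ / (j₁.factorial : ℝ))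
        * (‖x‖ ^ j₂ / (j₂.factorial : ℝ))
      ≤ ((‖b₁ - a₁‖ + 1) ^ j₁ * (j₁.factorial : ℝ) * ((‖b₂ - a₂‖ + 1) ^ j₂ * (j₂.factorial : ℝ))
          * ((‖a₂‖ + 1) * M₁) ^ j₁ * (M₂ ^ (j₁ + j₂) / ((j₁ + j₂).factorial : ℝ)))
          * (‖x‖ ^ j₁ / (j₁.factorial : ℝ)) * (‖x‖ ^ j₂ / (j₂.factorial : ℝ)) := by
        gcongr
    _ ≤ ((‖b₁ - a₁‖ + 1) ^ j₁ * (j₁.factorial : ℝ) * ((‖b₂ - a₂‖ + 1) ^ j₂ * (j₂.factorial : ℝ))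
          * ((‖a₂‖ + 1) * M₁) ^ j₁
          * (M₂ ^ (j₁ + j₂) / ((j₁.factorial : ℝ) * (j₂.factorial : ℝ))))
          * (‖x‖ ^ j₁ / (j₁.factorial : ℝ)) * (‖x‖ ^ j₂ / (j₂.factorial : ℝ)) := by
        gcongr
    _ = ((‖b₁ - a₁‖ + 1) * ((‖a₂‖ + 1) * M₁) * M₂ * ‖x‖) ^ j₁ / (j₁.factorial : ℝ)
        * (((‖b₂ - a₂‖ + 1) * M₂ * ‖x‖) ^ j₂ / (j₂.factorial : ℝ)) := by
        simp only [pow_add, mul_pow]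
        field_simp

lemma summable_W (hb₁ : ∀ n : ℕ, b₁ ≠ -(n : ℂ)) (hb₂ : ∀ n : ℕ, b₂ ≠ -(n : ℂ))
    (hM₁ : ∀ k : ℕ, ((k : ℝ) + 1) ≤ M₁ * ‖b₁ + (k : ℂ)‖)
    (hM₂ : ∀ k : ℕ, ((k : ℝ) + 1) ≤ M₂ * ‖b₂ + (k : ℂ)‖)
    (hM₁1 : 1 ≤ M₁) (hM₂1 : 1 ≤ M₂) :
    Summable fun q : (ℕ × ℕ) × ℕ =>
      ‖Tt a₁ a₂ b₁ b₂ x q.1.1 q.1.2 * Gt a₁ a₂ b₁ b₂ y q.1.1 q.1.2 q.2‖ := by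
  have hM₁0 : (0:ℝ) ≤ M₁ := by linarith
  have hM₂0 : (0:ℝ) ≤ M₂ := by linarith
  apply summable_aux3 1 ((‖b₁ - a₁‖ + 1) * ((‖a₂‖ + 1) * M₁) * M₂ * ‖x‖)
    ((‖b₂ - a₂‖ + 1) * M₂ * ‖x‖) ((‖a₂‖ + 1) * M₁ * ((‖a₁‖ + 1) * M₂) * ‖y‖)
    (by norm_num) (by positivity) (by positivity) (by positivity)
  rintro ⟨⟨j₁, j₂⟩, i⟩
  rw [norm_mul, one_mul]
  have hT := norm_T_le a₁ a₂ b₁ b₂ x hb₁ hb₂ hM₁ hM₂ hM₁1 hM₂1 j₁ j₂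
  have hG := norm_G_le a₁ a₂ b₁ b₂ y hb₁ hb₂ hM₁ hM₂ hM₁1 hM₂1 j₁ j₂ i
  calc ‖Tt a₁ a₂ b₁ b₂ x j₁ j₂‖ * ‖Gt a₁ a₂ b₁ b₂ y j₁ j₂ i‖
      ≤ (((‖b₁ - a₁‖ + 1) * ((‖a₂‖ + 1) * M₁) * M₂ * ‖x‖) ^ j₁ / (j₁.factorial : ℝ)
          * (((‖b₂ - a₂‖ + 1) * M₂ * ‖x‖) ^ j₂ / (j₂.factorial : ℝ)))
          * (((‖a₂‖ + 1) * M₁ * ((‖a₁‖ + 1) * M₂) * ‖y‖) ^ i / (i.factorial : ℝ)) :=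
        mul_le_mul hT hG (norm_nonneg _) (by positivity)
    _ = ((‖b₁ - a₁‖ + 1) * ((‖a₂‖ + 1) * M₁) * M₂ * ‖x‖) ^ j₁ / (j₁.factorial : ℝ)
          * (((‖b₂ - a₂‖ + 1) * M₂ * ‖x‖) ^ j₂ / (j₂.factorial : ℝ))
          * (((‖a₂‖ + 1) * M₁ * ((‖a₁‖ + 1) * M₂) * ‖y‖) ^ i / (i.factorial : ℝ)) := by ring

end bounds3

/-- Reindexing equivalence for the quadruple sum. -/
def e4 : ℕ × (ℕ × (ℕ × ℕ)) ≃ ℕ × ((ℕ × ℕ) × ℕ) where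
  toFun q := (q.2.2.2, ((q.2.1, q.2.2.1), q.1))
  invFun z := (z.2.2, (z.2.1.1, (z.2.1.2, z.1)))
  left_inv q := rfl
  right_inv z := rfl

set_option maxHeartbeats 2000000 in
theorem twoFtwo_addition (a₁ a₂ b₁ b₂ : ℂ)
    (hb₁ : ∀ n : ℕ, b₁ ≠ -(n : ℂ)) (hb₂ : ∀ n : ℕ, b₂ ≠ -(n : ℂ)) (x y : ℂ) :
    hyp [a₁, a₂] [b₁, b₂] (x + y) =
      Complex.exp x * ∑' j : ℕ × ℕ,
        (poch (b₁ - a₁) j.1 * poch (b₂ - a₂) j.2 * poch a₂ j.1 /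
            (poch b₁ j.1 * poch b₂ (j.1 + j.2))) *
          ((-x) ^ j.1 / (Nat.factorial j.1 : ℂ)) * ((-x) ^ j.2 / (Nat.factorial j.2 : ℂ)) *
          hyp [a₁, a₂ + (j.1 : ℂ)] [b₁ + (j.1 : ℂ), b₂ + ((j.1 : ℂ) + (j.2 : ℂ))] y := by
  obtain ⟨M₁, hM₁1, hM₁⟩ := exists_M b₁ hb₁
  obtain ⟨M₂, hM₂1, hM₂⟩ := exists_M b₂ hb₂
  -- summability facts
  have hWn := summable_W a₁ a₂ b₁ b₂ x y hb₁ hb₂ hM₁ hM₂ hM₁1 hM₂1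
  have hW : Summable (fun q : (ℕ × ℕ) × ℕ =>
      Tt a₁ a₂ b₁ b₂ x q.1.1 q.1.2 * Gt a₁ a₂ b₁ b₂ y q.1.1 q.1.2 q.2) := hWn.of_norm
  have hexp_n : Summable fun l : ℕ => ‖x ^ l / (l.factorial : ℂ)‖ := by
    apply Summable.congr (Real.summable_pow_div_factorial ‖x‖)
    intro n
    rw [norm_div, norm_pow, Complex.norm_natCast]
  have hPn := summable_P a₁ a₂ b₁ b₂ x y hb₁ hb₂ hM₁ hM₂ hM₁1 hM₂1
  have hPt : Summable fun p : ℕ × ℕ => Pt a₁ a₂ b₁ b₂ x y p.1 p.2 := hPn.of_norm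
  have hPswap : Summable fun p : ℕ × ℕ => Pt a₁ a₂ b₁ b₂ x y p.2 p.1 :=
    ((Equiv.prodComm ℕ ℕ).summable_iff).1 hPt
  have hFt : Summable (fun q : ℕ × (ℕ × (ℕ × ℕ)) =>
      Ft a₁ a₂ b₁ b₂ x y q.1 q.2.1 q.2.2.1 q.2.2.2) := by
    apply Summable.of_norm
    have h1 : Summable fun z : ℕ × ((ℕ × ℕ) × ℕ) =>
        ‖(x ^ z.1 / (z.1.factorial : ℂ))
          * (Tt a₁ a₂ b₁ b₂ x z.2.1.1 z.2.1.2 * Gt a₁ a₂ b₁ b₂ y z.2.1.1 z.2.1.2 z.2.2)‖ :=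
      Summable.mul_norm (f := fun l : ℕ => x ^ l / (l.factorial : ℂ))
        (g := fun w : (ℕ × ℕ) × ℕ =>
          Tt a₁ a₂ b₁ b₂ x w.1.1 w.1.2 * Gt a₁ a₂ b₁ b₂ y w.1.1 w.1.2 w.2) hexp_n hWn
    have h2 := (e4.summable_iff (f := fun z : ℕ × ((ℕ × ℕ) × ℕ) =>
        ‖(x ^ z.1 / (z.1.factorial : ℂ))
          * (Tt a₁ a₂ b₁ b₂ x z.2.1.1 z.2.1.2 * Gt a₁ a₂ b₁ b₂ y z.2.1.1 z.2.1.2 z.2.2)‖)).2 h1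
    apply h2.congr
    intro q
    exact congrArg norm (WF_eq a₁ a₂ b₁ b₂ x y hb₁ hb₂ q.2.1 q.2.2.1 q.1 q.2.2.2)
  -- LHS reduction
  have hLHS : hyp [a₁, a₂] [b₁, b₂] (x + y) = ∑' p : ℕ × ℕ, Pt a₁ a₂ b₁ b₂ x y p.2 p.1 := by
    rw [hyp, tsum_antidiag _ hPswap]
    apply tsum_congr
    intro n
    have e1 : (([a₁, a₂].map fun c => poch c n).prod / (([b₁, b₂].map fun c => poch c n).prod))
        * (x + y) ^ n / (n.factorial : ℂ)
        = poch a₁ n * poch a₂ n / (poch b₁ n * poch b₂ n) * (x + y) ^ n / (n.factorial : ℂ) := by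
      simp
    rw [e1, lhs_term a₁ a₂ b₁ b₂ x y hb₁ hb₂ n]
  -- RHS reduction
  have hshift : ∀ j₁ j₂ : ℕ,
      hyp [a₁, a₂ + (j₁ : ℂ)] [b₁ + (j₁ : ℂ), b₂ + ((j₁ : ℂ) + (j₂ : ℂ))] y
        = ∑' i, Gt a₁ a₂ b₁ b₂ y j₁ j₂ i := by
    intro j₁ j₂
    rw [hyp]
    apply tsum_congr
    intro i
    rw [Gt]
    simp
  have step1 : (∑' j : ℕ × ℕ, Tt a₁ a₂ b₁ b₂ x j.1 j.2 *
        hyp [a₁, a₂ + (j.1 : ℂ)] [b₁ + (j.1 : ℂ), b₂ + ((j.1 : ℂ) + (j.2 : ℂ))] y)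
      = ∑' q : (ℕ × ℕ) × ℕ, Tt a₁ a₂ b₁ b₂ x q.1.1 q.1.2 * Gt a₁ a₂ b₁ b₂ y q.1.1 q.1.2 q.2 := by
    rw [Summable.tsum_prod' hW (fun j => hW.prod_factor j)]
    apply tsum_congr
    intro j
    rw [hshift j.1 j.2]
    exact tsum_mul_left.symm
  have step2 : Complex.exp x * (∑' q : (ℕ × ℕ) × ℕ,
        Tt a₁ a₂ b₁ b₂ x q.1.1 q.1.2 * Gt a₁ a₂ b₁ b₂ y q.1.1 q.1.2 q.2)
      = ∑' z : ℕ × ((ℕ × ℕ) × ℕ), (x ^ z.1 / (z.1.factorial : ℂ))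
          * (Tt a₁ a₂ b₁ b₂ x z.2.1.1 z.2.1.2 * Gt a₁ a₂ b₁ b₂ y z.2.1.1 z.2.1.2 z.2.2) := by
    rw [Complex.exp_eq_exp_ℂ, NormedSpace.exp_eq_tsum_div]
    exact tsum_mul_tsum_of_summable_norm (f := fun l : ℕ => x ^ l / (l.factorial : ℂ))
      (g := fun w : (ℕ × ℕ) × ℕ =>
        Tt a₁ a₂ b₁ b₂ x w.1.1 w.1.2 * Gt a₁ a₂ b₁ b₂ y w.1.1 w.1.2 w.2) hexp_n hWn
  have step3 : (∑' z : ℕ × ((ℕ × ℕ) × ℕ), (x ^ z.1 / (z.1.factorial : ℂ))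
          * (Tt a₁ a₂ b₁ b₂ x z.2.1.1 z.2.1.2 * Gt a₁ a₂ b₁ b₂ y z.2.1.1 z.2.1.2 z.2.2))
      = ∑' q : ℕ × (ℕ × (ℕ × ℕ)), Ft a₁ a₂ b₁ b₂ x y q.1 q.2.1 q.2.2.1 q.2.2.2 := by
    rw [← Equiv.tsum_eq e4 (fun z : ℕ × ((ℕ × ℕ) × ℕ) => (x ^ z.1 / (z.1.factorial : ℂ))
          * (Tt a₁ a₂ b₁ b₂ x z.2.1.1 z.2.1.2 * Gt a₁ a₂ b₁ b₂ y z.2.1.1 z.2.1.2 z.2.2))]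
    apply tsum_congr
    intro q
    exact WF_eq a₁ a₂ b₁ b₂ x y hb₁ hb₂ q.2.1 q.2.2.1 q.1 q.2.2.2
  have step4 : (∑' q : ℕ × (ℕ × (ℕ × ℕ)), Ft a₁ a₂ b₁ b₂ x y q.1 q.2.1 q.2.2.1 q.2.2.2)
      = ∑' p : ℕ × ℕ, Pt a₁ a₂ b₁ b₂ x y p.1 p.2 := by
    have hmid : ∀ i : ℕ, (∑' c : ℕ × (ℕ × ℕ), Ft a₁ a₂ b₁ b₂ x y i c.1 c.2.1 c.2.2)
        = ∑' k : ℕ, Pt a₁ a₂ b₁ b₂ x y i k := by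
      intro i
      have hFi : Summable (fun r : ℕ × (ℕ × ℕ) => Ft a₁ a₂ b₁ b₂ x y i r.1 r.2.1 r.2.2) :=
        hFt.prod_factor i
      have hBn := summable_B a₁ a₂ b₁ b₂ x y hb₁ hb₂ hM₁ hM₂ hM₁1 hM₂1 i
      have hBt : Summable fun p : ℕ × ℕ => Bt a₁ a₂ b₁ b₂ x y i p.1 p.2 := hBn.of_norm
      calc (∑' r : ℕ × (ℕ × ℕ), Ft a₁ a₂ b₁ b₂ x y i r.1 r.2.1 r.2.2)
          = ∑' j₁ : ℕ, ∑' c : ℕ × ℕ, Ft a₁ a₂ b₁ b₂ x y i j₁ c.1 c.2 :=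
            Summable.tsum_prod' hFi (fun j₁ => hFi.prod_factor j₁)
        _ = ∑' j₁ : ℕ, ∑' s : ℕ, Bt a₁ a₂ b₁ b₂ x y i j₁ s := by
            apply tsum_congr
            intro j₁
            rw [tsum_antidiag _ (hFi.prod_factor j₁)]
            exact tsum_congr (fun s => key1 a₁ a₂ b₁ b₂ x y hb₁ hb₂ i j₁ s)
        _ = ∑' p : ℕ × ℕ, Bt a₁ a₂ b₁ b₂ x y i p.1 p.2 :=
            (Summable.tsum_prod' hBt (fun j₁ => hBt.prod_factor j₁)).symm
        _ = ∑' k : ℕ, Pt a₁ a₂ b₁ b₂ x y i k := by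
            rw [tsum_antidiag _ hBt]
            exact tsum_congr (fun k => key2 a₁ a₂ b₁ b₂ x y hb₁ hb₂ i k)
    calc (∑' q : ℕ × (ℕ × (ℕ × ℕ)), Ft a₁ a₂ b₁ b₂ x y q.1 q.2.1 q.2.2.1 q.2.2.2)
        = ∑' i : ℕ, ∑' c : ℕ × (ℕ × ℕ), Ft a₁ a₂ b₁ b₂ x y i c.1 c.2.1 c.2.2 :=
          Summable.tsum_prod' hFt (fun i => hFt.prod_factor i)
      _ = ∑' i : ℕ, ∑' k : ℕ, Pt a₁ a₂ b₁ b₂ x y i k := tsum_congr hmid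
      _ = ∑' p : ℕ × ℕ, Pt a₁ a₂ b₁ b₂ x y p.1 p.2 :=
          (Summable.tsum_prod' hPt (fun i => hPt.prod_factor i)).symm
  have hswap : (∑' p : ℕ × ℕ, Pt a₁ a₂ b₁ b₂ x y p.2 p.1)
      = ∑' p : ℕ × ℕ, Pt a₁ a₂ b₁ b₂ x y p.1 p.2 :=
    ((Equiv.prodComm ℕ ℕ).tsum_eq (fun p : ℕ × ℕ => Pt a₁ a₂ b₁ b₂ x y p.2 p.1)).symm
  have hfold : (∑' j : ℕ × ℕ,
      (poch (b₁ - a₁) j.1 * poch (b₂ - a₂) j.2 * poch a₂ j.1 /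
          (poch b₁ j.1 * poch b₂ (j.1 + j.2))) *
        ((-x) ^ j.1 / (Nat.factorial j.1 : ℂ)) * ((-x) ^ j.2 / (Nat.factorial j.2 : ℂ)) *
        hyp [a₁, a₂ + (j.1 : ℂ)] [b₁ + (j.1 : ℂ), b₂ + ((j.1 : ℂ) + (j.2 : ℂ))] y)
      = ∑' j : ℕ × ℕ, Tt a₁ a₂ b₁ b₂ x j.1 j.2 *
          hyp [a₁, a₂ + (j.1 : ℂ)] [b₁ + (j.1 : ℂ), b₂ + ((j.1 : ℂ) + (j.2 : ℂ))] y :=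
    tsum_congr (fun j => by rw [Tt])
  rw [hLHS, hswap, ← step4, ← step3, ← step2, ← step1, hfold]
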